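/- For every j ∈ ℤ there are exactly 10 colored partitions π with shape {j−1, j−1, j} and weight wt(π) = (−1,−2), namely the partitions X_a(j−1)X_b(j−1)X_c(j) with ({a,b}; c) equal to ({6,5};8), ({6,4};8), ({8,2};8), ({6,6};7), ({7,6};6), ({8,5};6), ({8,4};6), ({8,6};5), ({8,6};4), ({8,8};2); moreover the sum of N(π) over these ten partitions equals 7. -/

import Mathlib

/-- A colored partition: a finitely supported multiplicity function on parts `X_s(j)`,
where `s` is the color and `j ∈ ℤ` the degree.  (Genuine colored partitions have
colors in `{1,…,8}`, expressed by `cpValid`.) -/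
abbrev CPart := (ℕ × ℤ) →₀ ℕ

/-- The colored partition consisting of the single part `X_s(j)`. -/
noncomputable def Xp (s : ℕ) (j : ℤ) : CPart := Finsupp.single (s, j) 1

/-- The colors of all parts lie in `{1,…,8}`. -/
def cpValid (π : CPart) : Prop := ∀ p ∈ π.support, 1 ≤ p.1 ∧ p.1 ≤ 8

/-- The length `ℓ(π)`: the total number of parts. -/
def cpLength (π : CPart) : ℕ := π.sum fun _ m => m

/-- The degree `|π|`: the sum of the degrees of the parts. -/
def cpDeg (π : CPart) : ℤ := π.sum fun p m => (m : ℤ) * p.2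

/-- The shape `sh(π)`: the multiset of the degrees of the parts. -/
def cpShape (π : CPart) : Multiset ℤ := π.sum fun p m => Multiset.replicate m p.2

/-- `ρ ⊂ π` : `ρ` is a subpartition of `π`. -/
def cpSub (ρ π : CPart) : Prop := ∀ p, ρ p ≤ π p

/-- The color pairs `(i₁,i₂)` for elements `X_{i₁}(j)X_{i₂}(j)` of `lt(R̄)`. -/
def eqPairs : List (ℕ × ℕ) :=
  [(1,1),(2,1),(2,2),(3,1),(3,2),(3,3),(4,2),(4,3),(4,4),(5,1),(5,2),(5,3),(5,4),(5,5),
   (6,2),(6,4),(6,5),(6,6),(7,3),(7,4),(7,5),(7,6),(7,7),(8,5),(8,6),(8,7),(8,8)]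

/-- The color pairs `(i₁,i₂)` for elements `X_{i₁}(j−1)X_{i₂}(j)` of `lt(R̄)`. -/
def adjPairs : List (ℕ × ℕ) :=
  [(1,1),(1,2),(1,3),(1,4),(1,5),(1,6),(1,7),(1,8),(2,2),(2,4),(2,6),(2,7),(2,8),
   (3,3),(3,5),(3,6),(3,7),(3,8),(4,7),(4,8),(5,6),(5,8),(6,6),(6,8),(7,7),(7,8),(8,8)]

/-- The set `lt(R̄)` of leading terms of the quadratic relations. -/
def ltR : Set CPart :=
  {ρ | ∃ j : ℤ, ∃ p ∈ eqPairs, ρ = Xp p.1 j + Xp p.2 j} ∪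
  {ρ | ∃ j : ℤ, ∃ p ∈ adjPairs, ρ = Xp p.1 (j-1) + Xp p.2 j}

/-- `E(π) = {ρ ∈ lt(R̄) : ρ ⊂ π}`. -/
def Eset (π : CPart) : Set CPart := {ρ | ρ ∈ ltR ∧ cpSub ρ π}

/-- `N(π) = max(#E(π) − 1, 0)`. -/
noncomputable def Npi (π : CPart) : ℕ := (Eset π).ncard - 1

/-- The set `R`: `lt(R̄)` together with the two families of cubic leading terms. -/
def Rset : Set CPart :=
  ltR ∪ {ρ | ∃ j : ℤ, ρ = Xp 3 (j-1) + Xp 4 j + Xp 1 j ∨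
    ρ = Xp 8 (j-1) + Xp 4 (j-1) + Xp 6 j}

/-- The `𝔥`-weight of the color `s`, written in the basis `(α₁, α₂)`. -/
def wcol : ℕ → ℤ × ℤ
  | 1 => (1, 1)
  | 2 => (1, 0)
  | 3 => (0, 1)
  | 4 => (0, 0)
  | 5 => (0, 0)
  | 6 => (0, -1)
  | 7 => (-1, 0)
  | 8 => (-1, -1)
  | _ => (0, 0)

/-- The weight `wt(π) ∈ ℤ²`. -/
def cpWt (π : CPart) : ℤ × ℤ := π.sum fun p m => m • wcol p.1

/-- The ten colored partitions `X_a(j−1)X_b(j−1)X_c(j)` of Lemma 7(b). -/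
noncomputable def tenB (j : ℤ) : List CPart :=
  [Xp 6 (j-1) + Xp 5 (j-1) + Xp 8 j,
   Xp 6 (j-1) + Xp 4 (j-1) + Xp 8 j,
   Xp 8 (j-1) + Xp 2 (j-1) + Xp 8 j,
   Xp 6 (j-1) + Xp 6 (j-1) + Xp 7 j,
   Xp 7 (j-1) + Xp 6 (j-1) + Xp 6 j,
   Xp 8 (j-1) + Xp 5 (j-1) + Xp 6 j,
   Xp 8 (j-1) + Xp 4 (j-1) + Xp 6 j,
   Xp 8 (j-1) + Xp 6 (j-1) + Xp 5 j,
   Xp 8 (j-1) + Xp 6 (j-1) + Xp 4 j,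
   Xp 8 (j-1) + Xp 8 (j-1) + Xp 2 j]

/-!
A colored partition of shape `{j−1, j−1, j}` is `X_a(j−1) X_b(j−1) X_c(j)`, and it determines
`c` and the unordered pair `{a, b}`; its weight is `w(a) + w(b) + w(c)`, so the classification is a
finite check over colour triples.  The only length-two subpartitions of such a partition are
`X_a(j−1)X_b(j−1)`, `X_a(j−1)X_c(j)` and `X_b(j−1)X_c(j)`, and each lies in `lt(R̄)` exactly when
its colour pair is in the corresponding table; this gives `N(π)` as an explicit function of
`(a, b, c)`.
-/

namespace Multiset

variable {α : Type*}

theorem exists_cons_of_map_eq_cons {β : Type*} [DecidableEq α] {f : α → β} {s : Multiset α}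
    {b : β} {t : Multiset β} (h : s.map f = b ::ₘ t) :
    ∃ a s', s = a ::ₘ s' ∧ f a = b ∧ s'.map f = t :=
  let ⟨a, ha, hab, ht⟩ := (map_eq_cons f s t b).mpr h
  ⟨a, s.erase a, (cons_erase ha).symm, hab, ht⟩

theorem pair_le_triple {p q a b c : α} (h : ({p, q} : Multiset α) ≤ {a, b, c}) :
    ({p, q} : Multiset α) = {a, b} ∨ ({p, q} : Multiset α) = {a, c} ∨
      ({p, q} : Multiset α) = {b, c} := by
  obtain ⟨s, hs⟩ := le_iff_exists_add.mp h
  obtain ⟨r, rfl⟩ : ∃ r, s = {r} := card_eq_one.mp <| by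
    simpa using congrArg card hs
  rw [add_comm, singleton_add] at hs
  have hr : r ∈ ({a, b, c} : Multiset α) := hs ▸ mem_cons_self r _
  simp only [insert_eq_cons, mem_cons, mem_singleton] at hr
  rcases hr with rfl | rfl | rfl
  · exact Or.inr <| Or.inr ((cons_inj_right r).mp hs).symm
  · rw [show ({a, r, c} : Multiset α) = r ::ₘ {a, c} from cons_swap a r {c}] at hs
    exact Or.inr <| Or.inl ((cons_inj_right r).mp hs).symm
  · rw [show ({a, b, r} : Multiset α) = r ::ₘ {a, b} from
      (congrArg (a ::ₘ ·) (pair_comm b r)).trans (cons_swap a r {b})] at hs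
    exact Or.inl ((cons_inj_right r).mp hs).symm

end Multiset

theorem Finsupp.single_add_single_le_triple {α : Type*} {p q a b c : α}
    (h : single p 1 + single q 1 ≤ single a 1 + single b 1 + single c (1 : ℕ)) :
    single p 1 + single q 1 = single a 1 + single b (1 : ℕ) ∨
      single p 1 + single q 1 = single a 1 + single c (1 : ℕ) ∨
      single p 1 + single q 1 = single b 1 + single c (1 : ℕ) := by
  classical
  simp only [← orderIsoMultiset.le_iff_le, ← orderIsoMultiset.injective.eq_iff,
    coe_orderIsoMultiset, toMultiset_add, toMultiset_single, one_nsmul,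
    Multiset.singleton_add] at h ⊢
  exact Multiset.pair_le_triple h

theorem Set.ncard_setOf_and_eq_or_and_eq_or_and_eq {α : Type*} {A B C : α} {P Q R : Prop}
    [Decidable P] [Decidable Q] [Decidable R] (hAB : A ≠ B) (hAC : A ≠ C) (hBC : R → B ≠ C) :
    {x | P ∧ x = A ∨ Q ∧ x = B ∨ R ∧ x = C}.ncard =
      (if P then 1 else 0) + (if Q then 1 else 0) + (if R then 1 else 0) := by
  have hCB : R → C ≠ B := fun h => (hBC h).symm
  by_cases hP : P <;> by_cases hQ : Q <;> by_cases hR : R <;>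
    simp [*, Set.ofPred_or, Set.ncard_insert_of_notMem, hAB.symm, hAC.symm]

noncomputable def trio (j : ℤ) (a b c : ℕ) : CPart := Xp a (j - 1) + Xp b (j - 1) + Xp c j

theorem Xp_inj {x y : ℕ} {u v : ℤ} : Xp x u = Xp y v ↔ x = y ∧ u = v := by
  simp [Xp, Finsupp.single_left_inj]

theorem Xp_add_Xp_eq_iff {x y x' y' : ℕ} {u v u' v' : ℤ} :
    Xp x u + Xp y v = Xp x' u' + Xp y' v' ↔
      x = x' ∧ u = u' ∧ y = y' ∧ v = v' ∨ x = y' ∧ u = v' ∧ y = x' ∧ v = u' := by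
  simp [Xp, Finsupp.single_add_single_eq_single_add_single, and_assoc]

theorem trio_eq_trio_iff {j : ℤ} {a b c a' b' c' : ℕ} :
    trio j a b c = trio j a' b' c' ↔ c = c' ∧ (a = a' ∧ b = b' ∨ a = b' ∧ b = a') := by
  constructor
  · intro h
    obtain rfl : c' = c := by
      simpa [trio, Xp, Finsupp.single_apply] using DFunLike.congr_fun h (c, j)
    simpa [trio, Xp_add_Xp_eq_iff] using h
  · rintro ⟨rfl, ⟨rfl, rfl⟩ | ⟨rfl, rfl⟩⟩
    · rfl
    · simp only [trio, add_comm (Xp a _)]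

theorem toMultiset_trio (j : ℤ) (a b c : ℕ) :
    (trio j a b c).toMultiset = {(a, j - 1), (b, j - 1), (c, j)} := by
  simp [trio, Xp, Finsupp.toMultiset_add, Multiset.singleton_add]

theorem cpShape_eq_map_toMultiset (π : CPart) : cpShape π = π.toMultiset.map Prod.snd := by
  rw [cpShape, Finsupp.toMultiset_apply, Finsupp.sum, Finsupp.sum,
    ← Multiset.coe_mapAddMonoidHom, map_sum]
  simp [Multiset.nsmul_singleton]

theorem exists_eq_trio_of_cpShape {π : CPart} {j : ℤ} (h : cpShape π = {j - 1, j - 1, j}) :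
    ∃ a b c, π = trio j a b c := by
  classical
  rw [cpShape_eq_map_toMultiset] at h
  obtain ⟨⟨a, u⟩, s, hs, rfl, h₁⟩ := Multiset.exists_cons_of_map_eq_cons h
  obtain ⟨⟨b, v⟩, s', rfl, rfl, h₂⟩ := Multiset.exists_cons_of_map_eq_cons h₁
  obtain ⟨⟨c, w⟩, s'', rfl, rfl, h₃⟩ := Multiset.exists_cons_of_map_eq_cons h₂
  obtain rfl := Multiset.map_eq_zero.mp h₃
  refine ⟨a, b, c, Finsupp.orderIsoMultiset.injective ?_⟩
  simp [hs, toMultiset_trio]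

theorem cpShape_trio (j : ℤ) (a b c : ℕ) : cpShape (trio j a b c) = {j - 1, j - 1, j} := by
  simp [cpShape_eq_map_toMultiset, toMultiset_trio]

theorem cpValid_trio_iff {j : ℤ} {a b c : ℕ} :
    cpValid (trio j a b c) ↔ (1 ≤ a ∧ a ≤ 8) ∧ (1 ≤ b ∧ b ≤ 8) ∧ (1 ≤ c ∧ c ≤ 8) := by
  simp only [cpValid, ← Finsupp.mem_toMultiset, toMultiset_trio]
  simp

theorem cpWt_add (ρ π : CPart) : cpWt (ρ + π) = cpWt ρ + cpWt π :=
  Finsupp.sum_add_index' (fun _ => zero_nsmul _) (fun _ => add_nsmul _)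

theorem cpWt_trio (j : ℤ) (a b c : ℕ) : cpWt (trio j a b c) = wcol a + wcol b + wcol c := by
  simp only [trio, cpWt_add]
  simp [cpWt, Xp]

theorem cpSub_iff_le {ρ π : CPart} : cpSub ρ π ↔ ρ ≤ π := Finsupp.le_def.symm

theorem Xp_add_Xp_same_mem_ltR_iff {a b : ℕ} {k : ℤ} :
    Xp a k + Xp b k ∈ ltR ↔ (a, b) ∈ eqPairs ∨ (b, a) ∈ eqPairs := by
  simp only [ltR, Set.mem_union, Set.mem_ofPred_eq, Xp_add_Xp_eq_iff, Prod.exists]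
  constructor
  · rintro (⟨k', x, y, hxy, ⟨rfl, -, rfl, -⟩ | ⟨rfl, -, rfl, -⟩⟩ | ⟨k', x, y, -, h⟩)
    · exact Or.inl hxy
    · exact Or.inr hxy
    · omega
  · rintro (h | h)
    · exact Or.inl ⟨k, a, b, h, Or.inl ⟨rfl, rfl, rfl, rfl⟩⟩
    · exact Or.inl ⟨k, b, a, h, Or.inr ⟨rfl, rfl, rfl, rfl⟩⟩

theorem Xp_pred_add_Xp_mem_ltR_iff {a c : ℕ} {j : ℤ} :
    Xp a (j - 1) + Xp c j ∈ ltR ↔ (a, c) ∈ adjPairs := by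
  simp only [ltR, Set.mem_union, Set.mem_ofPred_eq, Xp_add_Xp_eq_iff, Prod.exists]
  constructor
  · rintro (⟨k, x, y, -, h⟩ | ⟨k, x, y, hxy, ⟨rfl, -, rfl, -⟩ | ⟨-, h, -, h'⟩⟩)
    · omega
    · exact hxy
    · omega
  · exact fun h => Or.inr ⟨j, a, c, h, Or.inl ⟨rfl, rfl, rfl, rfl⟩⟩

theorem mem_Eset_trio_iff {ρ : CPart} {j : ℤ} {a b c : ℕ} :
    ρ ∈ Eset (trio j a b c) ↔
      ((a, b) ∈ eqPairs ∨ (b, a) ∈ eqPairs) ∧ ρ = Xp a (j - 1) + Xp b (j - 1) ∨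
      (a, c) ∈ adjPairs ∧ ρ = Xp a (j - 1) + Xp c j ∨
      (b, c) ∈ adjPairs ∧ ρ = Xp b (j - 1) + Xp c j := by
  simp only [Eset, Set.mem_ofPred_eq, cpSub_iff_le]
  constructor
  · rintro ⟨hρ, hle⟩
    obtain ⟨x, u, y, v, rfl⟩ : ∃ x u y v, ρ = Xp x u + Xp y v := by
      rcases hρ with ⟨k, p, -, rfl⟩ | ⟨k, p, -, rfl⟩ <;> exact ⟨_, _, _, _, rfl⟩
    obtain h | h | h : Xp x u + Xp y v = Xp a (j - 1) + Xp b (j - 1) ∨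
        Xp x u + Xp y v = Xp a (j - 1) + Xp c j ∨ Xp x u + Xp y v = Xp b (j - 1) + Xp c j :=
      Finsupp.single_add_single_le_triple hle
    all_goals rw [h] at hρ ⊢
    · exact Or.inl ⟨Xp_add_Xp_same_mem_ltR_iff.mp hρ, rfl⟩
    · exact Or.inr <| Or.inl ⟨Xp_pred_add_Xp_mem_ltR_iff.mp hρ, rfl⟩
    · exact Or.inr <| Or.inr ⟨Xp_pred_add_Xp_mem_ltR_iff.mp hρ, rfl⟩
  · rintro (⟨h, rfl⟩ | ⟨h, rfl⟩ | ⟨h, rfl⟩)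
    · exact ⟨Xp_add_Xp_same_mem_ltR_iff.mpr h, le_self_add⟩
    · exact ⟨Xp_pred_add_Xp_mem_ltR_iff.mpr h,
        (le_self_add : _ ≤ _ + Xp b (j - 1)).trans_eq (by rw [trio]; abel)⟩
    · exact ⟨Xp_pred_add_Xp_mem_ltR_iff.mpr h,
        (le_self_add : _ ≤ _ + Xp a (j - 1)).trans_eq (by rw [trio]; abel)⟩

/-- `#E(trio j a b c)`; for `a = b` the last two candidate leading terms coincide. -/
def trioLtCount (a b c : ℕ) : ℕ :=
  (if (a, b) ∈ eqPairs ∨ (b, a) ∈ eqPairs then 1 else 0) + (if (a, c) ∈ adjPairs then 1 else 0) +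
    (if a ≠ b ∧ (b, c) ∈ adjPairs then 1 else 0)

theorem Npi_trio (j : ℤ) (a b c : ℕ) : Npi (trio j a b c) = trioLtCount a b c - 1 := by
  have hE : Eset (trio j a b c) =
      {ρ | ((a, b) ∈ eqPairs ∨ (b, a) ∈ eqPairs) ∧ ρ = Xp a (j - 1) + Xp b (j - 1) ∨
        (a, c) ∈ adjPairs ∧ ρ = Xp a (j - 1) + Xp c j ∨
        (a ≠ b ∧ (b, c) ∈ adjPairs) ∧ ρ = Xp b (j - 1) + Xp c j} := by
    ext ρ
    rw [mem_Eset_trio_iff]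
    by_cases hab : a = b
    · subst hab; simp
    · simp [hab]
  rw [Npi, hE, Set.ncard_setOf_and_eq_or_and_eq_or_and_eq, trioLtCount]
  · simp [Xp_inj]
  · simp [Xp_add_Xp_eq_iff]
  · rintro ⟨hab, -⟩
    simpa [Xp_inj] using hab

def tenTriples : List (ℕ × ℕ × ℕ) :=
  [(6, 5, 8), (6, 4, 8), (8, 2, 8), (6, 6, 7), (7, 6, 6), (8, 5, 6), (8, 4, 6), (8, 6, 5),
    (8, 6, 4), (8, 8, 2)]

theorem tenB_eq_map_trio (j : ℤ) : tenB j = tenTriples.map fun t => trio j t.1 t.2.1 t.2.2 := rfl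

theorem tenTriples_colors_wcol :
    ∀ t ∈ tenTriples, ((1 ≤ t.1 ∧ t.1 ≤ 8) ∧ (1 ≤ t.2.1 ∧ t.2.1 ≤ 8) ∧ (1 ≤ t.2.2 ∧ t.2.2 ≤ 8)) ∧
      wcol t.1 + wcol t.2.1 + wcol t.2.2 = (-1, -2) := by
  decide

theorem exists_mem_tenTriples_of_wcol {a b c : ℕ} (ha : 1 ≤ a ∧ a ≤ 8) (hb : 1 ≤ b ∧ b ≤ 8)
    (hc : 1 ≤ c ∧ c ≤ 8) (hw : wcol a + wcol b + wcol c = (-1, -2)) :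
    ∃ t ∈ tenTriples, c = t.2.2 ∧ (a = t.1 ∧ b = t.2.1 ∨ a = t.2.1 ∧ b = t.1) := by
  have hcheck : ∀ a ∈ Finset.Icc 1 8, ∀ b ∈ Finset.Icc 1 8, ∀ c ∈ Finset.Icc 1 8,
      wcol a + wcol b + wcol c = (-1, -2) →
      ∃ t ∈ tenTriples, c = t.2.2 ∧ (a = t.1 ∧ b = t.2.1 ∨ a = t.2.1 ∧ b = t.1) := by
    decide
  exact hcheck a (Finset.mem_Icc.mpr ha) b (Finset.mem_Icc.mpr hb) c (Finset.mem_Icc.mpr hc) hw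

theorem tenTriples_trio_injOn (j : ℤ) : ∀ s ∈ tenTriples, ∀ t ∈ tenTriples,
    trio j s.1 s.2.1 s.2.2 = trio j t.1 t.2.1 t.2.2 → s = t := by
  simp only [trio_eq_trio_iff]
  decide

theorem mem_tenB_iff {π : CPart} {j : ℤ} :
    π ∈ tenB j ↔ cpValid π ∧ cpShape π = {j - 1, j - 1, j} ∧ cpWt π = (-1, -2) := by
  rw [tenB_eq_map_trio, List.mem_map]
  constructor
  · rintro ⟨t, ht, rfl⟩
    obtain ⟨hcol, hw⟩ := tenTriples_colors_wcol t ht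
    exact ⟨cpValid_trio_iff.mpr hcol, cpShape_trio .., (cpWt_trio ..).trans hw⟩
  · rintro ⟨hv, hs, hw⟩
    obtain ⟨a, b, c, rfl⟩ := exists_eq_trio_of_cpShape hs
    obtain ⟨ha, hb, hc⟩ := cpValid_trio_iff.mp hv
    obtain ⟨t, ht, heq⟩ := exists_mem_tenTriples_of_wcol ha hb hc ((cpWt_trio ..).symm.trans hw)
    exact ⟨t, ht, (trio_eq_trio_iff.mpr heq).symm⟩

/-- There are exactly 10 colored partitions of shape `{j−1,j−1,j}` and weight `−α₁ − 2α₂`,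
namely those of `tenB j`, and the sum of `N(π)` over them is 7. -/
theorem shape_jm1_jm1_j_wt_neg (j : ℤ) :
    {π : CPart | cpValid π ∧ cpShape π = {j - 1, j - 1, j} ∧ cpWt π = (-1, -2)} =
      {π | π ∈ tenB j} ∧
    {π : CPart | cpValid π ∧ cpShape π = {j - 1, j - 1, j} ∧ cpWt π = (-1, -2)}.ncard = 10 ∧
    ((tenB j).map Npi).sum = 7 := by
  have hset : {π : CPart | cpValid π ∧ cpShape π = {j - 1, j - 1, j} ∧ cpWt π = (-1, -2)} =
      {π | π ∈ tenB j} := Set.ext fun _ => mem_tenB_iff.symm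
  have hnodup : (tenB j).Nodup := by
    rw [tenB_eq_map_trio]
    exact List.Nodup.map_on (tenTriples_trio_injOn j) (by decide)
  refine ⟨hset, ?_, ?_⟩
  · rw [hset, ← List.coe_toFinset, Set.ncard_coe_finset, List.toFinset_card_of_nodup hnodup]
    rfl
  · rw [tenB_eq_map_trio, List.map_map]
    simp only [Function.comp_def, Npi_trio]
    decide
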